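/- arXiv:1211.5257 — 2 statements merged into one kernel-verified Lean document; each statement's English description precedes it below -/
import Mathlib

section
/- Let m ≥ 2 with m ≡ 6 (mod 8). Then wt(f_{0,1}) = wt(f_{1,2}) = 2^{m-1} - 2^{(m-2)/2} and wt(f_{2,3}) = wt(f_{0,3}) = 2^{m-1} + 2^{(m-2)/2}, where wt(f) denotes the number of x ∈ F_2^m with f(x) = 1. -/
open Finset

/-- Hamming weight of a vector of `F₂^m`. -/
def wt {m : ℕ} (x : Fin m → ZMod 2) : ℕ :=
  (Finset.univ.filter (fun i => x i = 1)).card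

/-- The Boolean function `f_{i₁,i₂}` : value `1` iff `wt x ≡ i₁ or i₂ (mod 4)`. -/
def bf (i₁ i₂ : ℕ) {m : ℕ} (x : Fin m → ZMod 2) : ZMod 2 :=
  if wt x % 4 = i₁ ∨ wt x % 4 = i₂ then 1 else 0

/-- Inner product over `F₂`. -/
def dot {m : ℕ} (a x : Fin m → ZMod 2) : ZMod 2 := ∑ i, a i * x i

lemma wt_eq_sum {m : ℕ} (x : Fin m → ZMod 2) :
    wt x = ∑ i, if x i = 1 then 1 else 0 := Finset.card_filter _ _

lemma wt_cons {m : ℕ} (a : ZMod 2) (y : Fin m → ZMod 2) :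
    wt (Fin.cons a y) = (if a = 1 then 1 else 0) + wt y := by
  rw [wt_eq_sum, Fin.sum_univ_succ]
  simp only [Fin.cons_zero, Fin.cons_succ]
  rw [← wt_eq_sum]

/-- Number of vectors of weight `≡ r (mod 4)`. -/
def N (m r : ℕ) : ℕ := (univ.filter (fun x : Fin m → ZMod 2 => wt x % 4 = r)).card

lemma N_succ (m r : ℕ) (hr : r < 4) :
    N (m+1) r = N m r + N m ((r+3) % 4) := by
  unfold N
  rw [Finset.card_filter, Finset.card_filter, Finset.card_filter,
    ← (Fin.consEquiv (fun _ => ZMod 2)).sum_comp, Fintype.sum_prod_type]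
  have h2 : ∀ g : ZMod 2 → ℕ, ∑ a : ZMod 2, g a = g 0 + g 1 := by
    intro g; rfl
  rw [h2]
  simp only [Fin.consEquiv, Equiv.coe_fn_mk, wt_cons]
  norm_num
  rw [add_comm]
  congr 1
  apply Finset.filter_congr
  intro x _
  omega

lemma quad (m : ℕ) :
    N (m+1) 0 = N m 0 + N m 3 ∧ N (m+1) 1 = N m 1 + N m 0 ∧
    N (m+1) 2 = N m 2 + N m 1 ∧ N (m+1) 3 = N m 3 + N m 2 := by
  refine ⟨N_succ m 0 (by norm_num), ?_, ?_, ?_⟩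
  · have := N_succ m 1 (by norm_num); simpa using this
  · have := N_succ m 2 (by norm_num); simpa using this
  · have := N_succ m 3 (by norm_num); simpa using this

lemma N_zero : N 0 0 = 1 ∧ N 0 1 = 0 ∧ N 0 2 = 0 ∧ N 0 3 = 0 := by decide

lemma key (k : ℕ) :
    N (8*k+6) 0 = 2^(8*k+4) ∧ N (8*k+6) 2 = 2^(8*k+4) ∧
    N (8*k+6) 1 + 2^(4*k+2) = 2^(8*k+4) ∧ N (8*k+6) 3 = 2^(8*k+4) + 2^(4*k+2) := by
  induction k with
  | zero =>
    have h0 := N_zero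
    have q0 := quad 0
    have q1 := quad 1
    have q2 := quad 2
    have q3 := quad 3
    have q4 := quad 4
    have q5 := quad 5
    norm_num at q0 q1 q2 q3 q4 q5 ⊢
    omega
  | succ k ih =>
    have q0 := quad (8*k+6)
    have q1 := quad (8*k+7)
    have q2 := quad (8*k+8)
    have q3 := quad (8*k+9)
    have q4 := quad (8*k+10)
    have q5 := quad (8*k+11)
    have q6 := quad (8*k+12)
    have q7 := quad (8*k+13)
    rw [show 8*k+6+1 = 8*k+7 by omega] at q0
    rw [show 8*k+7+1 = 8*k+8 by omega] at q1
    rw [show 8*k+8+1 = 8*k+9 by omega] at q2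
    rw [show 8*k+9+1 = 8*k+10 by omega] at q3
    rw [show 8*k+10+1 = 8*k+11 by omega] at q4
    rw [show 8*k+11+1 = 8*k+12 by omega] at q5
    rw [show 8*k+12+1 = 8*k+13 by omega] at q6
    rw [show 8*k+13+1 = 8*(k+1)+6 by omega] at q7
    have p1 : 2^(8*(k+1)+4) = 256 * 2^(8*k+4) := by ring
    have p2 : 2^(4*(k+1)+2) = 16 * 2^(4*k+2) := by ring
    omega

lemma bf_card {M : ℕ} (i j : ℕ) (hij : i ≠ j) :
    (univ.filter (fun x : Fin M → ZMod 2 => bf i j x = 1)).card = N M i + N M j := by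
  have h1 : (univ.filter (fun x : Fin M → ZMod 2 => bf i j x = 1))
      = univ.filter (fun x : Fin M → ZMod 2 => wt x % 4 = i ∨ wt x % 4 = j) := by
    apply Finset.filter_congr
    intro x _
    unfold bf
    by_cases h : wt x % 4 = i ∨ wt x % 4 = j <;> simp [h]
  rw [h1, Finset.filter_or, Finset.card_union_of_disjoint]
  · rfl
  · simp only [Finset.disjoint_left, Finset.mem_filter]
    rintro x ⟨-, h1⟩ ⟨-, h2⟩
    exact hij (h1 ▸ h2)

theorem stmt_12 (m : ℕ) (hm : 2 ≤ m) (h8 : m % 8 = 6) :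
    (Finset.univ.filter (fun x : Fin m → ZMod 2 => bf 0 1 x = 1)).card
        = 2 ^ (m - 1) - 2 ^ ((m - 2) / 2) ∧
      (Finset.univ.filter (fun x : Fin m → ZMod 2 => bf 1 2 x = 1)).card
        = 2 ^ (m - 1) - 2 ^ ((m - 2) / 2) ∧
      (Finset.univ.filter (fun x : Fin m → ZMod 2 => bf 2 3 x = 1)).card
        = 2 ^ (m - 1) + 2 ^ ((m - 2) / 2) ∧
      (Finset.univ.filter (fun x : Fin m → ZMod 2 => bf 0 3 x = 1)).card
        = 2 ^ (m - 1) + 2 ^ ((m - 2) / 2) := by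
  obtain ⟨k, rfl⟩ : ∃ k, m = 8*k+6 := ⟨m/8, by omega⟩
  have hk := key k
  have e1 : 8*k+6-1 = 8*k+5 := by omega
  have e2 : (8*k+6-2)/2 = 4*k+2 := by omega
  have p1 : (2:ℕ)^(8*k+5) = 2 * 2^(8*k+4) := by ring
  rw [bf_card 0 1 (by norm_num), bf_card 1 2 (by norm_num),
    bf_card 2 3 (by norm_num), bf_card 0 3 (by norm_num), e1, e2]
  omega
end

section
/- Let m ≥ 4 with m ≡ 6 (mod 8). Then the bent functions f_{1,2} and f_{0,3} are self-dual: for f ∈ {f_{1,2}, f_{0,3}} and every y ∈ F_2^m, ∑_{x ∈ F_2^m} (-1)^{f(x) + x·y} = 2^{m/2} · (-1)^{f(y)}. -/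
/-!
Since `(-1) ^ f₁₂(x) = Re ((1 + i) i ^ wt x)`, the Walsh transform of `f₁₂` at `y` is the real part
of `(1 + i) ∑ₓ i ^ wt x (-1) ^ (x·y)`, and that sum factors over the coordinates as
`(1 - i) ^ wt y (1 + i) ^ (m - wt y)`. Using `1 - i = -i (1 + i)` and `(1 + i)² = 2i`, for
`m ≡ 6 (mod 8)` the product equals `2 ^ (m/2)` times the conjugate of `(1 + i) i ^ wt y`, whose real
part is `2 ^ (m/2) (-1) ^ f₁₂(y)`. Finally `f₀₃ = 1 + f₁₂` flips the sign on both sides.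
-/

open Finset

lemma neg_one_pow_val_add {R : Type*} [Monoid R] [HasDistribNeg R] (a b : ZMod 2) :
    (-1 : R) ^ (a + b).val = (-1) ^ a.val * (-1) ^ b.val := by
  rw [ZMod.val_add, ← pow_add, ← pow_eq_pow_mod _ neg_one_sq]

lemma neg_one_pow_val_sum {R : Type*} [CommMonoid R] [HasDistribNeg R] {ι : Type*}
    (s : Finset ι) (g : ι → ZMod 2) :
    (-1 : R) ^ (∑ j ∈ s, g j).val = ∏ j ∈ s, (-1) ^ (g j).val := by
  induction s using Finset.cons_induction with
  | empty => simp
  | cons a s ha ih => rw [sum_cons, prod_cons, neg_one_pow_val_add, ih]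

lemma Zsqrtd.re_sum {d : ℤ} {ι : Type*} (s : Finset ι) (f : ι → ℤ√d) :
    (∑ i ∈ s, f i).re = ∑ i ∈ s, (f i).re :=
  map_sum (AddMonoidHom.mk' Zsqrtd.re Zsqrtd.re_add) f s

lemma wt_eq_sum_val {m : ℕ} (x : Fin m → ZMod 2) : wt x = ∑ i, (x i).val := by
  rw [wt, card_filter]
  refine sum_congr rfl fun i _ => ?_
  generalize x i = a
  fin_cases a <;> rfl

lemma wt_le {m : ℕ} (x : Fin m → ZMod 2) : wt x ≤ m :=
  (card_filter_le _ _).trans_eq (card_fin m)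

lemma prod_ite_eq_pow_wt {R : Type*} [CommMonoid R] {m : ℕ} (y : Fin m → ZMod 2) (a b : R) :
    ∏ j, (if y j = 1 then a else b) = a ^ wt y * b ^ (m - wt y) := by
  have hcard : #(univ.filter fun j => ¬ y j = 1) = m - wt y := by
    rw [filter_not, card_sdiff_of_subset (filter_subset _ _), card_univ, Fintype.card_fin, wt]
  rw [prod_ite, prod_const, prod_const, hcard, wt]

lemma sum_zmod_two_pow_val_mul_neg_one_pow {R : Type*} [CommRing R] (u : R) (c : ZMod 2) :
    ∑ b : ZMod 2, u ^ b.val * (-1) ^ (b * c).val = if c = 1 then 1 - u else 1 + u := by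
  rw [show (univ : Finset (ZMod 2)) = {0, 1} from rfl, sum_pair zero_ne_one]
  obtain rfl | rfl : c = 0 ∨ c = 1 := by revert c; decide
  all_goals simp [ZMod.val_one, sub_eq_add_neg]

theorem sum_pow_wt_mul_neg_one_pow_dot {R : Type*} [CommRing R] {m : ℕ} (u : R)
    (y : Fin m → ZMod 2) :
    ∑ x : Fin m → ZMod 2, u ^ wt x * (-1) ^ (dot x y).val
      = (1 - u) ^ wt y * (1 + u) ^ (m - wt y) := calc
  _ = ∑ x : Fin m → ZMod 2, ∏ j, u ^ (x j).val * (-1) ^ (x j * y j).val := by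
    refine sum_congr rfl fun x _ => ?_
    rw [wt_eq_sum_val, dot, neg_one_pow_val_sum, ← prod_pow_eq_pow_sum, prod_mul_distrib]
  _ = ∏ j, ∑ b : ZMod 2, u ^ b.val * (-1) ^ (b * y j).val :=
    (Fintype.prod_sum fun j (b : ZMod 2) => u ^ b.val * (-1) ^ (b * y j).val).symm
  _ = ∏ j, if y j = 1 then 1 - u else 1 + u := by
    simp only [sum_zmod_two_pow_val_mul_neg_one_pow]
  _ = _ := prod_ite_eq_pow_wt y _ _

def walsh {m : ℕ} (f : (Fin m → ZMod 2) → ZMod 2) (y : Fin m → ZMod 2) : ℤ :=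
  ∑ x, (-1 : ℤ) ^ (f x + dot x y).val

lemma walsh_one_add {m : ℕ} (f : (Fin m → ZMod 2) → ZMod 2) (y : Fin m → ZMod 2) :
    walsh (fun x => 1 + f x) y = -walsh f y := by
  simp only [walsh, ← sum_neg_distrib, add_assoc, neg_one_pow_val_add (1 : ZMod 2), ZMod.val_one,
    pow_one, neg_one_mul]

lemma bf_zero_three {m : ℕ} : @bf 0 3 m = fun x => 1 + bf 1 2 x := by
  funext x
  have : wt x % 4 < 4 := Nat.mod_lt _ (by norm_num)
  unfold bf
  interval_cases wt x % 4 <;> decide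

local notation "𝕚" => (Zsqrtd.sqrtd : GaussianInt)

lemma gaussian_i_sq : 𝕚 ^ 2 = -1 := by
  ext <;> simp [sq]

lemma star_gaussian_i : star 𝕚 = -𝕚 := by
  ext <;> simp

lemma gaussian_i_pow_four : 𝕚 ^ 4 = 1 := by
  rw [show 4 = 2 * 2 by rfl, pow_mul, gaussian_i_sq, neg_one_sq]

lemma neg_one_pow_bf_one_two_eq_re {m : ℕ} (x : Fin m → ZMod 2) :
    (-1 : ℤ) ^ (bf 1 2 x).val = ((1 + 𝕚) * 𝕚 ^ wt x).re := by
  have : wt x % 4 < 4 := Nat.mod_lt _ (by norm_num)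
  rw [pow_eq_pow_mod _ gaussian_i_pow_four, bf]
  interval_cases wt x % 4 <;> decide

lemma one_add_i_mul_pow_eq_two_pow_mul_star {w m : ℕ} (hw : w ≤ m) (h8 : m % 8 = 6) :
    (1 + 𝕚) * ((1 - 𝕚) ^ w * (1 + 𝕚) ^ (m - w)) = 2 ^ (m / 2) * star ((1 + 𝕚) * 𝕚 ^ w) := by
  have h1 : 1 - 𝕚 = -𝕚 * (1 + 𝕚) := by linear_combination gaussian_i_sq
  have hm : (1 + 𝕚) ^ m = 2 ^ (m / 2) * 𝕚 ^ (m / 2) := by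
    have h2 : (1 + 𝕚) ^ 2 = 2 * 𝕚 := by linear_combination gaussian_i_sq
    rw [← mul_pow, ← h2, ← pow_mul, Nat.mul_div_cancel' (by omega : 2 ∣ m)]
  have ht : 𝕚 ^ (m / 2) = -𝕚 := by
    rw [pow_eq_pow_mod _ gaussian_i_pow_four, show m / 2 % 4 = 3 by omega]
    linear_combination 𝕚 * gaussian_i_sq
  calc (1 + 𝕚) * ((1 - 𝕚) ^ w * (1 + 𝕚) ^ (m - w))
      = (-𝕚) ^ w * (1 + 𝕚) ^ (w + (m - w)) * (1 + 𝕚) := by rw [h1, mul_pow, pow_add]; ring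
    _ = 2 ^ (m / 2) * ((-𝕚) ^ w * (𝕚 ^ (m / 2) * (1 + 𝕚))) := by
      rw [Nat.add_sub_cancel' hw, hm]; ring
    _ = 2 ^ (m / 2) * ((-𝕚) ^ w * (1 - 𝕚)) := by rw [ht, h1]
    _ = 2 ^ (m / 2) * star ((1 + 𝕚) * 𝕚 ^ w) := by
      rw [star_mul, star_pow, star_add, star_one, star_gaussian_i]; ring

lemma walsh_bf_one_two_eq_re {m : ℕ} (y : Fin m → ZMod 2) :
    walsh (bf 1 2) y = ((1 + 𝕚) * ((1 - 𝕚) ^ wt y * (1 + 𝕚) ^ (m - wt y))).re := by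
  have hterm : ∀ x : Fin m → ZMod 2, (-1 : ℤ) ^ (bf 1 2 x + dot x y).val
      = ((1 + 𝕚) * (𝕚 ^ wt x * (-1) ^ (dot x y).val)).re := fun x => by
    rw [neg_one_pow_val_add, neg_one_pow_bf_one_two_eq_re, ← mul_assoc,
      show ((-1 : GaussianInt) ^ (dot x y).val) = (((-1 : ℤ) ^ (dot x y).val : ℤ) : GaussianInt)
        by push_cast; rfl, mul_comm _ (Int.cast _), Zsqrtd.re_smul, mul_comm]
  rw [walsh, sum_congr rfl fun x _ => hterm x, ← Zsqrtd.re_sum, ← mul_sum,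
    sum_pow_wt_mul_neg_one_pow_dot]

theorem walsh_bf_one_two_of_mod_eight {m : ℕ} (h8 : m % 8 = 6) (y : Fin m → ZMod 2) :
    walsh (bf 1 2) y = 2 ^ (m / 2) * (-1 : ℤ) ^ (bf 1 2 y).val := by
  rw [walsh_bf_one_two_eq_re, one_add_i_mul_pow_eq_two_pow_mul_star (wt_le y) h8,
    show (2 : GaussianInt) ^ (m / 2) = ((2 ^ (m / 2) : ℤ) : GaussianInt) by push_cast; rfl,
    Zsqrtd.re_smul, Zsqrtd.re_star, neg_one_pow_bf_one_two_eq_re]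

theorem stmt_15_general (m : ℕ) (h8 : m % 8 = 6) :
    ∀ f ∈ ({@bf 1 2 m, @bf 0 3 m} : Set ((Fin m → ZMod 2) → ZMod 2)),
      ∀ y : Fin m → ZMod 2,
        (∑ x : Fin m → ZMod 2, (-1 : ℤ) ^ (f x + dot x y).val)
          = 2 ^ (m / 2) * (-1 : ℤ) ^ (f y).val := by
  rintro f (rfl | rfl) y
  · exact walsh_bf_one_two_of_mod_eight h8 y
  · change walsh _ y = _
    rw [bf_zero_three, walsh_one_add, walsh_bf_one_two_of_mod_eight h8, neg_one_pow_val_add,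
      ZMod.val_one]
    ring

theorem stmt_15 (m : ℕ) (hm : 4 ≤ m) (h8 : m % 8 = 6) :
    ∀ f ∈ ({@bf 1 2 m, @bf 0 3 m} : Set ((Fin m → ZMod 2) → ZMod 2)),
      ∀ y : Fin m → ZMod 2,
        (∑ x : Fin m → ZMod 2, (-1 : ℤ) ^ (f x + dot x y).val)
          = 2 ^ (m / 2) * (-1 : ℤ) ^ (f y).val :=
  stmt_15_general m h8
end
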